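/- Let N ≥ 1 and ε ∈ (0,1]. Let x̂, ŵ ∈ ℝ^N, set v̂ = x̂ + ŵ, and assume 2‖ŵ‖₂ ≤ ε·|x̂[i]| for every i ∈ supp(x̂). Then for every i ∈ supp(x̂): (1−ε)|x̂[i]| ≤ |v̂[i]| ≤ (1+ε)|x̂[i]| and (1−ε)|v̂[i]| ≤ |x̂[i]| ≤ (1+ε)|v̂[i]|. Moreover, for every real v and every C ≥ 0: if |v − v̂[i]| ≤ Cε·|v̂[i]| then |v − x̂[i]| ≤ 2ε(C+1)·|x̂[i]|. -/

import Mathlib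

/-! Write `v̂ᵢ = x̂ᵢ + ŵᵢ`. Since `|ŵᵢ| ≤ ‖ŵ‖₂`, the noise hypothesis gives `2|ŵᵢ| ≤ ε|x̂ᵢ|`, so
`|v̂ᵢ|` lies within `ε|x̂ᵢ|/2` of `|x̂ᵢ|`; all the claims are then scalar estimates, the last one
by the triangle inequality `|v - x̂ᵢ| ≤ |v - v̂ᵢ| + |ŵᵢ|`. -/

theorem abs_le_sqrt_sum_sq {ι : Type*} [Fintype ι] (w : ι → ℝ) (i : ι) :
    |w i| ≤ Real.sqrt (∑ j, w j ^ 2) :=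
  Real.abs_le_sqrt (Finset.single_le_sum (fun j _ => sq_nonneg (w j)) (Finset.mem_univ i))

section PerturbedAbs

variable {K : Type*} [Field K] [LinearOrder K] [IsStrictOrderedRing K] {x w ε : K}

theorem abs_add_bounds_of_abs_le (hw : |w| ≤ ε * |x|) :
    (1 - ε) * |x| ≤ |x + w| ∧ |x + w| ≤ (1 + ε) * |x| := by
  have hlower := abs_sub_abs_le_abs_add x w
  have hupper := abs_add_le x w
  constructor <;> linarith

theorem abs_bounds_of_two_abs_le (hε : 0 ≤ ε) (hε1 : ε ≤ 1) (hw : 2 * |w| ≤ ε * |x|) :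
    (1 - ε) * |x + w| ≤ |x| ∧ |x| ≤ (1 + ε) * |x + w| := by
  have hlower := abs_sub_abs_le_abs_add x w
  have hupper := abs_add_le x w
  constructor
  · nlinarith [mul_le_mul_of_nonneg_left hupper (sub_nonneg.2 hε1),
      mul_nonneg (mul_nonneg hε (sub_nonneg.2 hε1)) (abs_nonneg x)]
  · nlinarith [mul_le_mul_of_nonneg_left hlower (by linarith : (0 : K) ≤ 1 + ε),
      mul_nonneg (mul_nonneg hε (sub_nonneg.2 hε1)) (abs_nonneg x)]

theorem abs_sub_le_of_abs_sub_add_le (hε : 0 ≤ ε) (hε1 : ε ≤ 1) (hw : 2 * |w| ≤ ε * |x|)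
    {v C : K} (hC : 0 ≤ C) (hv : |v - (x + w)| ≤ C * ε * |x + w|) :
    |v - x| ≤ 2 * ε * (C + 1) * |x| := by
  have hxw : |x + w| ≤ (1 + ε) * |x| :=
    (abs_add_bounds_of_abs_le (by linarith [abs_nonneg w])).2
  have htri : |v - x| ≤ |v - (x + w)| + |w| := by
    simpa using abs_sub_le v (x + w) x
  calc |v - x| ≤ C * (ε * |x + w|) + |w| := by linarith
    _ ≤ C * (ε * ((1 + ε) * |x|)) + |w| := by gcongr
    _ ≤ 2 * ε * (C + 1) * |x| := by
      nlinarith [mul_nonneg (mul_nonneg (mul_nonneg hC hε) (abs_nonneg x)) (sub_nonneg.2 hε1),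
        mul_nonneg hε (abs_nonneg x)]

end PerturbedAbs

theorem stmt_6_general (N : ℕ) (ε : ℝ) (hε : 0 < ε) (hε1 : ε ≤ 1)
    (xhat what : Fin N → ℝ)
    (hnoise : ∀ i, xhat i ≠ 0 → 2 * Real.sqrt (∑ j, what j ^ 2) ≤ ε * |xhat i|)
    (i : Fin N) (hi : xhat i ≠ 0) :
    ((1 - ε) * |xhat i| ≤ |xhat i + what i| ∧ |xhat i + what i| ≤ (1 + ε) * |xhat i|) ∧
    ((1 - ε) * |xhat i + what i| ≤ |xhat i| ∧ |xhat i| ≤ (1 + ε) * |xhat i + what i|) ∧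
    (∀ v C : ℝ, 0 ≤ C → |v - (xhat i + what i)| ≤ C * ε * |xhat i + what i| →
      |v - xhat i| ≤ 2 * ε * (C + 1) * |xhat i|) := by
  have hw : 2 * |what i| ≤ ε * |xhat i| :=
    le_trans (by gcongr; exact abs_le_sqrt_sum_sq what i) (hnoise i hi)
  exact ⟨abs_add_bounds_of_abs_le (by linarith [abs_nonneg (what i)]),
    abs_bounds_of_two_abs_le hε.le hε1 hw,
    fun v C hC hv => abs_sub_le_of_abs_sub_add_le hε.le hε1 hw hC hv⟩

/-- Converting accuracy with respect to the noisy vector `v̂ = x̂ + ŵ` into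
accuracy with respect to the sparse vector `x̂` at the spike positions. -/
theorem stmt_6 (N : ℕ) (hN : 1 ≤ N) (ε : ℝ) (hε : 0 < ε) (hε1 : ε ≤ 1)
    (xhat what : Fin N → ℝ)
    (hnoise : ∀ i, xhat i ≠ 0 → 2 * Real.sqrt (∑ j, what j ^ 2) ≤ ε * |xhat i|)
    (i : Fin N) (hi : xhat i ≠ 0) :
    ((1 - ε) * |xhat i| ≤ |xhat i + what i| ∧ |xhat i + what i| ≤ (1 + ε) * |xhat i|) ∧
    ((1 - ε) * |xhat i + what i| ≤ |xhat i| ∧ |xhat i| ≤ (1 + ε) * |xhat i + what i|) ∧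
    (∀ v C : ℝ, 0 ≤ C → |v - (xhat i + what i)| ≤ C * ε * |xhat i + what i| →
      |v - xhat i| ≤ 2 * ε * (C + 1) * |xhat i|) :=
  stmt_6_general N ε hε hε1 xhat what hnoise i hi
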